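/- arXiv:2301.12080 — 4 statements merged into one kernel-verified Lean document; each statement's English description precedes it below -/
import Mathlib

section
/- Let A and B be bounded linear operators on a Banach space X. Then the Yosida distance d_Y(A,B) := limsup_{μ→+∞} ‖A_μ − B_μ‖ equals ‖A − B‖, where T_μ := μ²R(μ,T) − μI denotes the Yosida approximation. -/
/-!
By the second resolvent identity, `A_μ - B_μ = μ² (R(μ,A) - R(μ,B))` factors as
`(μ R(μ,A)) (A - B) (μ R(μ,B))`, and `μ R(μ,T) = 1 + R(μ,T) T → 1` because the resolvent
of a bounded operator vanishes at infinity. Hence `A_μ - B_μ → A - B` in operator norm, so the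
`limsup` of the norms is a genuine limit equal to `‖A - B‖`.
-/

open Filter Topology Bornology

noncomputable def yosidaApprox {R A : Type*} [CommRing R] [Ring A] [Algebra R A]
    (a : A) (r : R) : A :=
  r ^ 2 • resolvent a r - r • 1

section Algebraic

variable {R A : Type*} [CommRing R] [Ring A] [Algebra R A]

theorem smul_resolvent_eq_one_add_resolvent_mul {a : A} {r : R} (h : r ∈ resolventSet R a) :
    r • resolvent a r = 1 + resolvent a r * a := by
  have hinv : resolvent a r * (algebraMap R A r - a) = 1 := by
    rw [spectrum.resolvent_eq h]
    exact h.unit.inv_mul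
  rw [mul_sub, ← Algebra.commutes, ← Algebra.smul_def] at hinv
  rw [← hinv, sub_add_cancel]

theorem yosidaApprox_sub_yosidaApprox {a b : A} {r : R}
    (ha : r ∈ resolventSet R a) (hb : r ∈ resolventSet R b) :
    yosidaApprox a r - yosidaApprox b r = (r • resolvent a r) * (a - b) * (r • resolvent b r) := by
  have hsub : yosidaApprox a r - yosidaApprox b r = r ^ 2 • (resolvent a r - resolvent b r) := by
    simp only [yosidaApprox, smul_sub]
    abel
  rw [hsub, spectrum.resolvent_sub_resolvent ha hb, smul_mul_assoc, mul_smul_comm, smul_mul_assoc,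
    smul_smul, sq]

end Algebraic

section Asymptotic

variable {𝕜 A : Type*} [NontriviallyNormedField 𝕜] [NormedRing A] [NormedAlgebra 𝕜 A]
  [CompleteSpace A]

theorem eventually_mem_resolventSet_cobounded (a : A) :
    ∀ᶠ z in cobounded 𝕜, z ∈ resolventSet 𝕜 a :=
  (spectrum.eventually_isUnit_resolvent a).mono fun _ ↦ spectrum.isUnit_resolvent.mpr

theorem tendsto_smul_resolvent_cobounded (a : A) :
    Tendsto (fun z : 𝕜 ↦ z • resolvent a z) (cobounded 𝕜) (𝓝 1) := by
  have hlim : Tendsto (fun z : 𝕜 ↦ 1 + resolvent a z * a) (cobounded 𝕜) (𝓝 1) := by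
    simpa using tendsto_const_nhds.add ((spectrum.resolvent_tendsto_cobounded a).mul_const a)
  refine hlim.congr' ?_
  filter_upwards [eventually_mem_resolventSet_cobounded a] with z hz
  exact (smul_resolvent_eq_one_add_resolvent_mul hz).symm

theorem tendsto_yosidaApprox_sub_yosidaApprox_cobounded (a b : A) :
    Tendsto (fun z : 𝕜 ↦ yosidaApprox a z - yosidaApprox b z) (cobounded 𝕜) (𝓝 (a - b)) := by
  have hlim : Tendsto (fun z : 𝕜 ↦ (z • resolvent a z) * (a - b) * (z • resolvent b z))
      (cobounded 𝕜) (𝓝 (1 * (a - b) * 1)) :=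
    ((tendsto_smul_resolvent_cobounded a).mul_const _).mul (tendsto_smul_resolvent_cobounded b)
  rw [one_mul, mul_one] at hlim
  refine hlim.congr' ?_
  filter_upwards [eventually_mem_resolventSet_cobounded a,
    eventually_mem_resolventSet_cobounded b] with z ha hb
  exact (yosidaApprox_sub_yosidaApprox ha hb).symm

end Asymptotic

/-- For bounded linear operators `A`, `B` on a Banach space `X`, the Yosida
distance `d_Y(A,B) = limsup_{μ→+∞} ‖A_μ − B_μ‖` equals `‖A − B‖`, where
`T_μ = μ²R(μ,T) − μI` is the Yosida approximation. -/
theorem yosida_stmt3 {X : Type*} [NormedAddCommGroup X] [NormedSpace ℂ X] [CompleteSpace X]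
    (A B : X →L[ℂ] X) :
    Filter.limsup (fun μ : ℝ =>
      ‖((μ : ℂ) ^ 2 • Ring.inverse ((μ : ℂ) • (1 : X →L[ℂ] X) - A) - (μ : ℂ) • 1)
        - ((μ : ℂ) ^ 2 • Ring.inverse ((μ : ℂ) • (1 : X →L[ℂ] X) - B) - (μ : ℂ) • 1)‖)
      atTop = ‖A - B‖ := by
  have hlim : Tendsto (fun μ : ℝ ↦ yosidaApprox A (μ : ℂ) - yosidaApprox B (μ : ℂ)) atTop
      (𝓝 (A - B)) :=
    (tendsto_yosidaApprox_sub_yosidaApprox_cobounded A B).comp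
      (RCLike.tendsto_ofReal_atTop_cobounded ℂ)
  simpa only [yosidaApprox, resolvent, Algebra.algebraMap_eq_smul_one] using hlim.norm.limsup_eq
end

section
/- Let A generate a C₀-semigroup having an exponential dichotomy, and let B generate a C₀-semigroup. If the Yosida distance d_Y(A,B) is sufficiently small (with a bound depending only on the growth constants M, ω of both semigroups and the dichotomy constants of A), then the semigroup generated by B also has an exponential dichotomy. -/
open Filter NormedSpace

/-!
The curve `s ↦ exp((1-s)b) exp(sa)` joins `exp b` to `exp a` with derivative
`exp((1-s)b) (a-b) exp(sa)`, so exponentials bounded by `c` on `[0,1]` satisfy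
`‖exp a - exp b‖ ≤ c² ‖a - b‖`. Applied to the Yosida approximations and passed to the strong
limit, this gives `‖S(1) - T(1)‖ ≤ c² d_Y(A, B)`. As invertibility is an open condition and the
unit circle is compact, every operator close enough to `T(1)` still has no spectrum on it.
-/

section ExpLipschitz

variable {𝔸 : Type*} [NormedRing 𝔸] [NormedAlgebra ℂ 𝔸] [CompleteSpace 𝔸]

lemma hasDerivAt_exp_smul_mul_exp_smul (a b : 𝔸) (s : ℝ) :
    HasDerivAt (fun s : ℝ => exp ((1 - (s : ℂ)) • b) * exp ((s : ℂ) • a))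
      (exp ((1 - (s : ℂ)) • b) * ((a - b) * exp ((s : ℂ) • a))) s := by
  have hs : HasDerivAt (fun s : ℝ => (s : ℂ)) 1 s := by
    simpa using (hasDerivAt_id s).ofReal_comp
  have hb := (hasDerivAt_exp_smul_const b (1 - (s : ℂ))).scomp s (hs.const_sub 1)
  have ha := (hasDerivAt_exp_smul_const' a (s : ℂ)).scomp s hs
  convert hb.mul ha using 1
  · rfl
  simp only [Function.comp_apply, neg_one_smul, one_smul, mul_sub, sub_mul, neg_mul, mul_assoc]
  abel

lemma norm_exp_sub_exp_le (a b : 𝔸) {c : ℝ}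
    (ha : ∀ t ∈ Set.Icc (0 : ℝ) 1, ‖exp ((t : ℂ) • a)‖ ≤ c)
    (hb : ∀ t ∈ Set.Icc (0 : ℝ) 1, ‖exp ((t : ℂ) • b)‖ ≤ c) :
    ‖exp a - exp b‖ ≤ c ^ 2 * ‖a - b‖ := by
  simpa using norm_image_sub_le_of_norm_deriv_le_segment_01'
    (fun s _ => (hasDerivAt_exp_smul_mul_exp_smul a b s).hasDerivWithinAt) fun s hs => by
      have hs' : s ∈ Set.Icc (0 : ℝ) 1 := Set.Ico_subset_Icc_self hs
      have h1s : 1 - s ∈ Set.Icc (0 : ℝ) 1 := ⟨by linarith [hs'.2], by linarith [hs'.1]⟩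
      calc ‖exp ((1 - (s : ℂ)) • b) * ((a - b) * exp ((s : ℂ) • a))‖
          ≤ ‖exp ((1 - (s : ℂ)) • b)‖ * (‖a - b‖ * ‖exp ((s : ℂ) • a)‖) :=
            (norm_mul_le _ _).trans (by gcongr; exact norm_mul_le _ _)
        _ ≤ c * (‖a - b‖ * c) := by
            gcongr
            · exact (norm_nonneg _).trans (ha 0 ⟨le_rfl, zero_le_one⟩)
            · exact_mod_cast hb (1 - s) h1s
            · exact ha s hs'
        _ = c ^ 2 * ‖a - b‖ := by ring

end ExpLipschitz

lemma ContinuousLinearMap.opNorm_le_of_tendsto_apply {𝕜 E F ι : Type*} [NontriviallyNormedField 𝕜]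
    [SeminormedAddCommGroup E] [NormedSpace 𝕜 E] [SeminormedAddCommGroup F] [NormedSpace 𝕜 F]
    {l : Filter ι} [l.NeBot] {f : ι → E →L[𝕜] F} {g : E →L[𝕜] F} {r : ℝ} (hr : 0 ≤ r)
    (hfg : ∀ x, Tendsto (fun i => f i x) l (nhds (g x))) (hf : ∀ᶠ i in l, ‖f i‖ ≤ r) :
    ‖g‖ ≤ r :=
  opNorm_le_bound _ hr fun x =>
    le_of_tendsto (hfg x).norm <| hf.mono fun _ hi => (le_opNorm _ x).trans (by gcongr)

lemma spectrum.exists_pos_forall_disjoint {𝕜 A : Type*} [NormedField 𝕜] [NormedRing A]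
    [NormedAlgebra 𝕜 A] [CompleteSpace A] {a : A} {K : Set 𝕜} (hK : IsCompact K)
    (h : Disjoint (spectrum 𝕜 a) K) :
    ∃ ε > 0, ∀ b : A, ‖b - a‖ < ε → Disjoint (spectrum 𝕜 b) K := by
  have hKunits : (fun z => algebraMap 𝕜 A z - a) '' K ⊆ {u : A | IsUnit u} := by
    rintro _ ⟨z, hz, rfl⟩
    exact spectrum.notMem_iff.mp (h.notMem_of_mem_right hz)
  obtain ⟨ε, hε, hthick⟩ := (hK.image (by fun_prop)).exists_thickening_subset_open
    Units.isOpen hKunits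
  refine ⟨ε, hε, fun b hb => Set.disjoint_right.mpr fun z hz => spectrum.notMem_iff.mpr ?_⟩
  refine hthick (Metric.mem_thickening_iff.mpr ⟨_, ⟨z, hz, rfl⟩, ?_⟩)
  rwa [dist_eq_norm, sub_sub_sub_cancel_left, norm_sub_rev]

lemma mul_exp_mul_le_mul_exp_abs {M ω t : ℝ} (hM : 0 ≤ M) (ht : t ∈ Set.Icc (0 : ℝ) 1) :
    M * Real.exp (ω * t) ≤ M * Real.exp |ω| := by
  gcongr
  calc ω * t ≤ |ω| * t := mul_le_mul_of_nonneg_right (le_abs_self ω) ht.1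
    _ ≤ |ω| := mul_le_of_le_one_right (abs_nonneg ω) ht.2

theorem yosida_stmt10_general {X : Type*} [NormedAddCommGroup X] [NormedSpace ℂ X] [CompleteSpace X]
    (T : ℝ → (X →L[ℂ] X)) (Alam : ℝ → (X →L[ℂ] X)) (M ω : ℝ)
    (hAexp : ∀ lam t : ℝ, 0 ≤ t →
      ‖NormedSpace.exp ((t : ℂ) • Alam lam)‖ ≤ M * Real.exp (2 * ω * t))
    (hAconv : ∀ t : ℝ, 0 ≤ t → ∀ x : X,
      Tendsto (fun lam : ℝ => NormedSpace.exp ((t : ℂ) • Alam lam) x) atTop (nhds (T t x)))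
    (hdich : spectrum ℂ (T 1) ∩ {z : ℂ | ‖z‖ = 1} = ∅) :
    ∃ δ > 0, ∀ S Blam : ℝ → (X →L[ℂ] X),
      S 0 = 1 →
      (∀ s t : ℝ, 0 ≤ s → 0 ≤ t → S (s + t) = S s * S t) →
      (∀ x : X, ContinuousOn (fun t : ℝ => S t x) (Set.Ici 0)) →
      (∀ t : ℝ, 0 ≤ t → ‖S t‖ ≤ M * Real.exp (ω * t)) →
      (∀ lam t : ℝ, 0 ≤ t →
        ‖NormedSpace.exp ((t : ℂ) • Blam lam)‖ ≤ M * Real.exp (2 * ω * t)) →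
      (∀ t : ℝ, 0 ≤ t → ∀ x : X,
        Tendsto (fun lam : ℝ => NormedSpace.exp ((t : ℂ) • Blam lam) x) atTop
          (nhds (S t x))) →
      IsBoundedUnder (· ≤ ·) atTop (fun lam : ℝ => ‖Alam lam - Blam lam‖) →
      Filter.limsup (fun lam : ℝ => ‖Alam lam - Blam lam‖) atTop < δ →
      spectrum ℂ (S 1) ∩ {z : ℂ | ‖z‖ = 1} = ∅ := by
  have hM : 0 ≤ M := (norm_nonneg _).trans (by simpa using hAexp 0 0 le_rfl)
  set c := M * Real.exp |2 * ω|
  have hexp_le (G : ℝ → X →L[ℂ] X)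
      (hG : ∀ lam t : ℝ, 0 ≤ t → ‖exp ((t : ℂ) • G lam)‖ ≤ M * Real.exp (2 * ω * t))
      (lam : ℝ) : ∀ t ∈ Set.Icc (0 : ℝ) 1, ‖exp ((t : ℂ) • G lam)‖ ≤ c := fun t ht =>
    (hG lam t ht.1).trans (mul_exp_mul_le_mul_exp_abs hM ht)
  have hsphere : IsCompact {z : ℂ | ‖z‖ = 1} := by
    simpa [Metric.sphere, dist_zero_right] using isCompact_sphere (0 : ℂ) 1
  obtain ⟨ε, hε, hstable⟩ := spectrum.exists_pos_forall_disjoint hsphere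
    (Set.disjoint_iff_inter_eq_empty.mpr hdich)
  refine ⟨ε / (c ^ 2 + 1), by positivity, fun S Blam _ _ _ _ hBexp hBconv hbdd hlim => ?_⟩
  have hnear : ∀ᶠ lam in atTop, ‖exp (Blam lam) - exp (Alam lam)‖ ≤ c ^ 2 * (ε / (c ^ 2 + 1)) :=
    (eventually_lt_of_limsup_lt hlim hbdd).mono fun lam hlam =>
      (norm_exp_sub_exp_le _ _ (hexp_le Blam hBexp lam) (hexp_le Alam hAexp lam)).trans
        (by rw [norm_sub_rev]; gcongr)
  have hclose : ‖S 1 - T 1‖ < ε := by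
    refine (ContinuousLinearMap.opNorm_le_of_tendsto_apply (by positivity)
      (fun x => ?_) hnear).trans_lt ?_
    · simpa using (hBconv 1 zero_le_one x).sub (hAconv 1 zero_le_one x)
    · rw [mul_div_assoc', div_lt_iff₀ (by positivity)]
      nlinarith
  exact Set.disjoint_iff_inter_eq_empty.mp (hstable _ hclose)

/-- Let `A` generate a `C₀`-semigroup `(T(t))` with `‖T(t)‖ ≤ Me^{ωt}` having
an exponential dichotomy (`σ(T(1))` misses the unit circle). Then there is `δ > 0`
(depending only on `M`, `ω` and the dichotomy data of `A`) such that for any generator `B` of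
a `C₀`-semigroup `(S(t))` with `‖S(t)‖ ≤ Me^{ωt}` (encoded via its Yosida approximations
`Blam` and those `Alam` of `A`, with the standard approximation properties), if the Yosida
distance `d_Y(A,B) = limsup_{λ→∞}‖Alam − Blam‖ < δ`, then `(S(t))` also has an exponential
dichotomy. -/
theorem yosida_stmt10 {X : Type*} [NormedAddCommGroup X] [NormedSpace ℂ X] [CompleteSpace X]
    (T : ℝ → (X →L[ℂ] X)) (Alam : ℝ → (X →L[ℂ] X)) (M ω : ℝ)
    (hT0 : T 0 = 1)
    (hTadd : ∀ s t : ℝ, 0 ≤ s → 0 ≤ t → T (s + t) = T s * T t)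
    (hTcont : ∀ x : X, ContinuousOn (fun t : ℝ => T t x) (Set.Ici 0))
    (hT : ∀ t : ℝ, 0 ≤ t → ‖T t‖ ≤ M * Real.exp (ω * t))
    (hAexp : ∀ lam t : ℝ, 0 ≤ t →
      ‖NormedSpace.exp ((t : ℂ) • Alam lam)‖ ≤ M * Real.exp (2 * ω * t))
    (hAconv : ∀ t : ℝ, 0 ≤ t → ∀ x : X,
      Tendsto (fun lam : ℝ => NormedSpace.exp ((t : ℂ) • Alam lam) x) atTop (nhds (T t x)))
    (hdich : spectrum ℂ (T 1) ∩ {z : ℂ | ‖z‖ = 1} = ∅) :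
    ∃ δ > 0, ∀ S Blam : ℝ → (X →L[ℂ] X),
      S 0 = 1 →
      (∀ s t : ℝ, 0 ≤ s → 0 ≤ t → S (s + t) = S s * S t) →
      (∀ x : X, ContinuousOn (fun t : ℝ => S t x) (Set.Ici 0)) →
      (∀ t : ℝ, 0 ≤ t → ‖S t‖ ≤ M * Real.exp (ω * t)) →
      (∀ lam t : ℝ, 0 ≤ t →
        ‖NormedSpace.exp ((t : ℂ) • Blam lam)‖ ≤ M * Real.exp (2 * ω * t)) →
      (∀ t : ℝ, 0 ≤ t → ∀ x : X,
        Tendsto (fun lam : ℝ => NormedSpace.exp ((t : ℂ) • Blam lam) x) atTop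
          (nhds (S t x))) →
      IsBoundedUnder (· ≤ ·) atTop (fun lam : ℝ => ‖Alam lam - Blam lam‖) →
      Filter.limsup (fun lam : ℝ => ‖Alam lam - Blam lam‖) atTop < δ →
      spectrum ℂ (S 1) ∩ {z : ℂ | ‖z‖ = 1} = ∅ :=
  yosida_stmt10_general T Alam M ω hAexp hAconv hdich
end

section
/- Let U be a closed linear operator generating a C₀-semigroup on X and F : X → X Fréchet differentiable at x. Then G := U + F (with D(G) = D(U)) is proto-differentiable at x ∈ D(U) and ∂G(x) = U + F'(x). More precisely: (i) W := U + F'(x) ⊆ ∂_i G(x), and (ii) ∂_s G(x) ⊆ W, where ∂_i and ∂_s are the inner and outer graphical derivatives. -/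
open Filter Topology Asymptotics

open Filter Topology Asymptotics

lemma aux_quot {X : Type*} [NormedAddCommGroup X] [NormedSpace ℝ X]
    {F : X → X} {F' : X →L[ℝ] X} {x u : X} (hF : HasFDerivAt F F' x)
    {t : ℕ → ℝ} {un : ℕ → X} (ht : ∀ n, 0 < t n) (ht0 : Tendsto t atTop (𝓝 0))
    (hun : Tendsto un atTop (𝓝 u)) :
    Tendsto (fun n => (t n)⁻¹ • (F (x + t n • un n) - F x)) atTop (𝓝 (F' u)) := by
  set h : ℕ → X := fun n => t n • un n with hh
  have hh0 : Tendsto h atTop (𝓝 0) := by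
    have := ht0.smul hun
    simpa using this
  have hlo : (fun n => F (x + h n) - F x - F' (h n)) =o[atTop] h := by
    have hx' : Tendsto (fun n => x + h n) atTop (𝓝 x) := by
      simpa using tendsto_const_nhds.add hh0
    have := (hF.isLittleO).comp_tendsto hx'
    simpa [Function.comp_def, map_add, add_sub_cancel_left] using this
  have hbig : h =O[atTop] t := by
    have h1 : un =O[atTop] (fun _ => (1 : ℝ)) := hun.isBigO_one ℝ
    have := (isBigO_refl t atTop).smul h1
    simpa using this
  have hlo2 : (fun n => F (x + h n) - F x - F' (h n)) =o[atTop] t := hlo.trans_isBigO hbig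
  have hz : Tendsto (fun n => (t n)⁻¹ • (F (x + h n) - F x - F' (h n))) atTop (𝓝 0) := by
    rw [NormedAddCommGroup.tendsto_nhds_zero]
    intro ε hε
    filter_upwards [hlo2.def (half_pos hε)] with n hn
    have htn := ht n
    calc ‖(t n)⁻¹ • (F (x + h n) - F x - F' (h n))‖
        = |t n|⁻¹ * ‖F (x + h n) - F x - F' (h n)‖ := by
          rw [norm_smul, Real.norm_eq_abs, abs_inv]
      _ ≤ |t n|⁻¹ * (ε / 2 * ‖t n‖) := by
          gcongr
      _ = ε / 2 := by
          rw [Real.norm_eq_abs]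
          field_simp [abs_of_pos htn]
      _ < ε := half_lt_self hε
  have key : ∀ n, (t n)⁻¹ • (F (x + t n • un n) - F x)
      = (t n)⁻¹ • (F (x + h n) - F x - F' (h n)) + F' (un n) := by
    intro n
    simp only [hh, map_smul]
    rw [smul_sub, smul_sub, smul_sub, smul_smul, inv_mul_cancel₀ (ht n).ne', one_smul]
    abel
  have hFu : Tendsto (fun n => F' (un n)) atTop (𝓝 (F' u)) :=
    (F'.continuous.tendsto _).comp hun
  have := hz.add hFu
  rw [zero_add] at this
  exact this.congr fun n => (key n).symm

/-- The inner graphical (proto-) derivative of `G` (with domain `D`) at `x`: pairs `(u,v)`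
such that for every sequence `tₙ ↓ 0` there are `(uₙ, vₙ) → (u,v)` with
`x + tₙuₙ ∈ D` and `(G(x+tₙuₙ) − G(x))/tₙ = vₙ`. -/
def protoInner {X : Type*} [NormedAddCommGroup X] [NormedSpace ℝ X]
    (G : X → X) (D : Set X) (x : X) : Set (X × X) :=
  {p | ∀ t : ℕ → ℝ, (∀ n, 0 < t n) → Tendsto t atTop (𝓝 0) →
    ∃ u v : ℕ → X, Tendsto u atTop (𝓝 p.1) ∧ Tendsto v atTop (𝓝 p.2) ∧
      ∀ n, x + t n • u n ∈ D ∧ G (x + t n • u n) - G x = t n • v n}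

/-- The outer graphical (proto-) derivative of `G` (with domain `D`) at `x`: pairs `(u,v)`
such that for SOME sequence `tₙ ↓ 0` there are `(uₙ, vₙ) → (u,v)` with
`x + tₙuₙ ∈ D` and `(G(x+tₙuₙ) − G(x))/tₙ = vₙ`. -/
def protoOuter {X : Type*} [NormedAddCommGroup X] [NormedSpace ℝ X]
    (G : X → X) (D : Set X) (x : X) : Set (X × X) :=
  {p | ∃ t : ℕ → ℝ, (∀ n, 0 < t n) ∧ Tendsto t atTop (𝓝 0) ∧
    ∃ u v : ℕ → X, Tendsto u atTop (𝓝 p.1) ∧ Tendsto v atTop (𝓝 p.2) ∧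
      ∀ n, x + t n • u n ∈ D ∧ G (x + t n • u n) - G x = t n • v n}

/-- Let `U` be a closed linear operator generating a `C₀`-semigroup on `X`
(with domain the submodule `DU`), and `F : X → X` Fréchet differentiable at `x` with
derivative `F'`. Then `G = U + F` (with `D(G) = D(U)`) is proto-differentiable at
`x ∈ D(U)` with `∂G(x) = W := U + F'(x)`; more precisely (i) `W ⊆ ∂ᵢG(x)` and
(ii) `∂ₛG(x) ⊆ W`. -/
theorem yosida_stmt12 {X : Type*} [NormedAddCommGroup X] [NormedSpace ℝ X]
    (DU : Submodule ℝ X) (U : DU →ₗ[ℝ] X)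
    (hUclosed : ∀ (un : ℕ → DU) (u v : X),
      Tendsto (fun n => (un n : X)) atTop (𝓝 u) →
      Tendsto (fun n => U (un n)) atTop (𝓝 v) →
      ∃ hu : u ∈ DU, U ⟨u, hu⟩ = v)
    (Tsg : ℝ → (X →L[ℝ] X))
    (hTsg0 : Tsg 0 = 1)
    (hTsgadd : ∀ s t : ℝ, 0 ≤ s → 0 ≤ t → Tsg (s + t) = Tsg s * Tsg t)
    (hTsgcont : ∀ y : X, ContinuousOn (fun t : ℝ => Tsg t y) (Set.Ici 0))
    (hgen : ∀ y : DU,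
      Tendsto (fun t : ℝ => t⁻¹ • (Tsg t (y : X) - (y : X))) (𝓝[>] 0) (𝓝 (U y)))
    (F : X → X) (F' : X →L[ℝ] X) (x : X) (hx : x ∈ DU)
    (hF : HasFDerivAt F F' x)
    (G : X → X) (hG : ∀ y (hy : y ∈ DU), G y = U ⟨y, hy⟩ + F y) :
    (∀ (u : X) (hu : u ∈ DU),
      (u, U ⟨u, hu⟩ + F' u) ∈ protoInner G (DU : Set X) x) ∧
    (∀ p ∈ protoOuter G (DU : Set X) x,
      ∃ hu : p.1 ∈ DU, p.2 = U ⟨p.1, hu⟩ + F' p.1) := by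
  constructor
  · -- (i) W ⊆ ∂ᵢG(x)
    intro u hu t ht ht0
    refine ⟨fun _ => u, fun n => U ⟨u, hu⟩ + (t n)⁻¹ • (F (x + t n • u) - F x),
      tendsto_const_nhds, tendsto_const_nhds.add (aux_quot hF ht ht0 tendsto_const_nhds), ?_⟩
    intro n
    have hmem : x + t n • u ∈ DU := DU.add_mem hx (DU.smul_mem _ hu)
    refine ⟨hmem, ?_⟩
    rw [hG _ hmem, hG _ hx]
    have hUeq : U ⟨x + t n • u, hmem⟩ = U ⟨x, hx⟩ + t n • U ⟨u, hu⟩ := by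
      have hsub : (⟨x + t n • u, hmem⟩ : DU) = ⟨x, hx⟩ + t n • ⟨u, hu⟩ := rfl
      rw [hsub, map_add, map_smul]
    rw [hUeq, smul_add, smul_smul, mul_inv_cancel₀ (ht n).ne', one_smul]
    abel
  · -- (ii) ∂ₛG(x) ⊆ W
    intro p hp
    obtain ⟨t, ht, ht0, un, vn, hun, hvn, hprop⟩ := hp
    have hmem : ∀ n, un n ∈ DU := by
      intro n
      have h2 : t n • un n ∈ DU := by
        have := DU.sub_mem (hprop n).1 hx
        simpa using this
      have := DU.smul_mem (t n)⁻¹ h2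
      rwa [smul_smul, inv_mul_cancel₀ (ht n).ne', one_smul] at this
    set z : ℕ → DU := fun n => ⟨un n, hmem n⟩ with hz
    have hstep : ∀ n, t n • U (z n) = t n • vn n - (F (x + t n • un n) - F x) := by
      intro n
      have h2 : U ⟨x + t n • un n, (hprop n).1⟩ + F (x + t n • un n)
          - (U ⟨x, hx⟩ + F x) = t n • vn n := by
        rw [← hG _ (hprop n).1, ← hG _ hx]
        exact (hprop n).2
      have h1 : U ⟨x + t n • un n, (hprop n).1⟩ = U ⟨x, hx⟩ + t n • U (z n) := by
        have hsub : (⟨x + t n • un n, (hprop n).1⟩ : DU) = ⟨x, hx⟩ + t n • z n := rfl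
        rw [hsub, map_add, map_smul]
      rw [h1] at h2
      rw [← h2]
      abel
    have hUz : ∀ n, U (z n) = vn n - (t n)⁻¹ • (F (x + t n • un n) - F x) := by
      intro n
      calc U (z n) = (t n)⁻¹ • (t n • U (z n)) := by
            rw [smul_smul, inv_mul_cancel₀ (ht n).ne', one_smul]
        _ = (t n)⁻¹ • (t n • vn n - (F (x + t n • un n) - F x)) := by rw [hstep n]
        _ = vn n - (t n)⁻¹ • (F (x + t n • un n) - F x) := by
            rw [smul_sub, smul_smul, inv_mul_cancel₀ (ht n).ne', one_smul]
    have hUz' : Tendsto (fun n => U (z n)) atTop (𝓝 (p.2 - F' p.1)) := by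
      have := hvn.sub (aux_quot hF ht ht0 hun)
      exact this.congr fun n => (hUz n).symm
    obtain ⟨huD, hUv⟩ := hUclosed z p.1 (p.2 - F' p.1) hun hUz'
    exact ⟨huD, by rw [hUv]; abel⟩
end

section
/- With A_a the generator of the delay-equation semigroup for x'(t) = a x(t−1) on X = C([−1,0],ℝ), the Yosida distance satisfies d_Y(A_a, A_b) ≤ 2|a − b| for all reals a, b, where d_Y(A_a,A_b) = limsup_{λ→∞} sup_{‖ψ‖≤1} sup_{t∈[−1,0]} λ²|((R(λ,A_a) − R(λ,A_b))ψ)(t)|. -/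
open Filter intervalIntegral

/-!
For `λ ≥ max 4 (max |a| |b|)` each value in the set is at most `2|a - b|`. Indeed, since
`|c| e^{-λ} ≤ λ e^{-λ} ≤ 1`, both denominators `λ - c e^{-λ}` are at least `λ - 1`, so their
reciprocals differ by at most `2 |a - b| e^{-λ} / λ²`. The first factor is at most `e^λ`
(`λ ∫_{-1}^0 e^{-λ s} ds = e^λ - 1`) and `e^{λ t} ≤ 1` on `[-1, 0]`: the exponentials cancel.
-/

lemma limsup_sSup_le_of_eventually {α : Type*} {l : Filter α} [l.NeBot] {S : α → Set ℝ} {C : ℝ}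
    (hC : 0 ≤ C) (h_nonneg : ∀ x, ∀ r ∈ S x, 0 ≤ r) (h_le : ∀ᶠ x in l, ∀ r ∈ S x, r ≤ C) :
    limsup (fun x => sSup (S x)) l ≤ C := by
  refine limsup_le_of_le (isCoboundedUnder_le_of_le l (x := 0) fun x => ?_) ?_
  · exact Real.sSup_nonneg (h_nonneg x)
  · filter_upwards [h_le] with x hx
    exact Real.sSup_le hx hC

lemma abs_mul_exp_neg_le_one {c lam : ℝ} (hc : |c| ≤ lam) : |c * Real.exp (-lam)| ≤ 1 := by
  have hexp : lam ≤ Real.exp lam := by linarith [Real.add_one_le_exp lam]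
  calc |c * Real.exp (-lam)| = |c| * Real.exp (-lam) := by rw [abs_mul, Real.abs_exp]
    _ ≤ Real.exp lam * Real.exp (-lam) := by gcongr; exact hc.trans hexp
    _ = 1 := by rw [← Real.exp_add, add_neg_cancel, Real.exp_zero]

lemma sub_one_le_sub_mul_exp_neg {c lam : ℝ} (hc : |c| ≤ lam) :
    lam - 1 ≤ lam - c * Real.exp (-lam) := by
  linarith [(abs_le.mp (abs_mul_exp_neg_le_one hc)).2]

lemma abs_one_div_sub_one_div_le {lam x y : ℝ} (hlam : 4 ≤ lam) (hx : lam - 1 ≤ x)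
    (hy : lam - 1 ≤ y) : |1 / x - 1 / y| ≤ 2 * |x - y| / lam ^ 2 := by
  have hx0 : 0 < x := by linarith
  have hy0 : 0 < y := by linarith
  have hxy : lam ^ 2 ≤ 2 * (x * y) := by nlinarith
  rw [div_sub_div _ _ hx0.ne' hy0.ne', abs_div, abs_of_pos (mul_pos hx0 hy0),
    div_le_div_iff₀ (mul_pos hx0 hy0) (by positivity)]
  calc |1 * y - x * 1| * lam ^ 2 = |x - y| * lam ^ 2 := by rw [abs_sub_comm]; ring_nf
    _ ≤ |x - y| * (2 * (x * y)) := by gcongr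
    _ = 2 * |x - y| * (x * y) := by ring

lemma integral_exp_neg_mul_neg_one_zero {lam : ℝ} (hlam : lam ≠ 0) :
    ∫ s in (-1 : ℝ)..0, Real.exp (-lam * s) = (Real.exp lam - 1) / lam := by
  rw [integral_comp_mul_left (fun x => Real.exp x) (neg_ne_zero.mpr hlam)]
  simp only [mul_neg, mul_one, neg_neg, mul_zero, integral_exp, Real.exp_zero, smul_eq_mul]
  field_simp
  ring

lemma abs_mul_integral_exp_neg_mul_add_le {lam M : ℝ} {ψ : ℝ → ℝ} (hlam : 0 < lam)
    (hψc : ContinuousOn ψ (Set.Icc (-1) 0)) (hψb : ∀ t ∈ Set.Icc (-1 : ℝ) 0, |ψ t| ≤ M) :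
    |(lam * ∫ s in (-1 : ℝ)..0, Real.exp (-lam * s) * ψ s) + ψ 0| ≤ M * Real.exp lam := by
  have hIcc : Set.uIcc (-1 : ℝ) 0 = Set.Icc (-1) 0 := Set.uIcc_of_le (by norm_num)
  have hint : IntervalIntegrable (fun s => Real.exp (-lam * s) * ψ s) MeasureTheory.volume (-1) 0 :=
    ((by fun_prop : Continuous fun s => Real.exp (-lam * s)).continuousOn.mul
      (hIcc ▸ hψc)).intervalIntegrable
  have hI : |∫ s in (-1 : ℝ)..0, Real.exp (-lam * s) * ψ s| ≤ M * ((Real.exp lam - 1) / lam) := by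
    calc |∫ s in (-1 : ℝ)..0, Real.exp (-lam * s) * ψ s|
        ≤ ∫ s in (-1 : ℝ)..0, |Real.exp (-lam * s) * ψ s| :=
          abs_integral_le_integral_abs (by norm_num)
      _ ≤ ∫ s in (-1 : ℝ)..0, M * Real.exp (-lam * s) := by
          refine integral_mono_on (by norm_num) hint.abs
            (Continuous.intervalIntegrable (by fun_prop) _ _) fun s hs => ?_
          rw [abs_mul, Real.abs_exp, mul_comm M]
          exact mul_le_mul_of_nonneg_left (hψb s hs) (Real.exp_pos _).le
      _ = M * ((Real.exp lam - 1) / lam) := by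
          rw [integral_const_mul, integral_exp_neg_mul_neg_one_zero hlam.ne']
  calc |(lam * ∫ s in (-1 : ℝ)..0, Real.exp (-lam * s) * ψ s) + ψ 0|
      ≤ lam * |∫ s in (-1 : ℝ)..0, Real.exp (-lam * s) * ψ s| + |ψ 0| := by
        rw [← abs_of_pos hlam, ← abs_mul, abs_of_pos hlam]; exact abs_add_le _ _
    _ ≤ lam * (M * ((Real.exp lam - 1) / lam)) + M := by
        gcongr; exact hψb 0 (by norm_num)
    _ = M * Real.exp lam := by field_simp; ring

lemma sq_mul_abs_resolvent_sub_le {a b lam t : ℝ} {ψ : ℝ → ℝ} (hlam : 4 ≤ lam)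
    (ha : |a| ≤ lam) (hb : |b| ≤ lam) (hψc : ContinuousOn ψ (Set.Icc (-1) 0))
    (hψb : ∀ t ∈ Set.Icc (-1 : ℝ) 0, |ψ t| ≤ 1) (ht : t ≤ 0) :
    lam ^ 2 *
      |((lam * ∫ s in (-1 : ℝ)..0, Real.exp (-lam * s) * ψ s) + ψ 0)
        * (1 / (lam - a * Real.exp (-lam)) - 1 / (lam - b * Real.exp (-lam)))
        * Real.exp (lam * t)| ≤ 2 * |a - b| := by
  have hlam0 : 0 < lam := by linarith
  have hD := abs_one_div_sub_one_div_le hlam (sub_one_le_sub_mul_exp_neg ha)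
    (sub_one_le_sub_mul_exp_neg hb)
  have hdiff : |lam - a * Real.exp (-lam) - (lam - b * Real.exp (-lam))|
      = |a - b| * Real.exp (-lam) := by
    rw [sub_sub_sub_cancel_left, ← sub_mul, abs_mul, Real.abs_exp, abs_sub_comm]
  have hF := abs_mul_integral_exp_neg_mul_add_le hlam0 hψc hψb
  have hE : Real.exp (lam * t) ≤ 1 :=
    Real.exp_le_one_iff.mpr (mul_nonpos_of_nonneg_of_nonpos hlam0.le ht)
  rw [hdiff] at hD
  calc lam ^ 2 * |((lam * ∫ s in (-1 : ℝ)..0, Real.exp (-lam * s) * ψ s) + ψ 0)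
        * (1 / (lam - a * Real.exp (-lam)) - 1 / (lam - b * Real.exp (-lam)))
        * Real.exp (lam * t)|
      = lam ^ 2 * (|(lam * ∫ s in (-1 : ℝ)..0, Real.exp (-lam * s) * ψ s) + ψ 0|
        * |1 / (lam - a * Real.exp (-lam)) - 1 / (lam - b * Real.exp (-lam))|
        * Real.exp (lam * t)) := by rw [abs_mul, abs_mul, Real.abs_exp]
    _ ≤ lam ^ 2 * (1 * Real.exp lam * (2 * (|a - b| * Real.exp (-lam)) / lam ^ 2) * 1) := by
        gcongr
    _ = 2 * |a - b| * (Real.exp lam * Real.exp (-lam)) := by field_simp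
    _ = 2 * |a - b| := by rw [← Real.exp_add, add_neg_cancel, Real.exp_zero, mul_one]

/-- For the generators `A_a`, `A_b` of the delay-equation semigroups for
`x'(t) = c x(t−1)` on `X = C([−1,0],ℝ)`, the Yosida distance satisfies
`d_Y(A_a, A_b) ≤ 2|a − b|`, where
`d_Y(A_a,A_b) = limsup_{λ→∞} sup_{‖ψ‖≤1} sup_{t∈[−1,0]} λ²|((R(λ,A_a) − R(λ,A_b))ψ)(t)|`
and, by the explicit resolvent formula,
`((R(λ,A_a) − R(λ,A_b))ψ)(t) = (λ∫_{−1}^0 e^{−λs}ψ(s)ds + ψ(0))·(1/(λ−ae^{−λ}) − 1/(λ−be^{−λ}))·e^{λt}`. -/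
theorem yosida_stmt18 (a b : ℝ) :
    Filter.limsup (fun lam : ℝ =>
      sSup {r : ℝ | ∃ ψ : ℝ → ℝ,
        ContinuousOn ψ (Set.Icc (-1 : ℝ) 0) ∧
        (∀ t ∈ Set.Icc (-1 : ℝ) 0, |ψ t| ≤ 1) ∧
        ∃ t ∈ Set.Icc (-1 : ℝ) 0,
          r = lam ^ 2 *
            |((lam * ∫ s in (-1 : ℝ)..0, Real.exp (-lam * s) * ψ s) + ψ 0)
              * (1 / (lam - a * Real.exp (-lam)) - 1 / (lam - b * Real.exp (-lam)))
              * Real.exp (lam * t)|}) atTop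
    ≤ 2 * |a - b| := by
  refine limsup_sSup_le_of_eventually (by positivity) ?_ ?_
  · rintro lam r ⟨ψ, -, -, t, -, rfl⟩
    positivity
  · filter_upwards [eventually_ge_atTop (max 4 (max |a| |b|))] with lam hlam
    rintro r ⟨ψ, hψc, hψb, t, ht, rfl⟩
    simp only [max_le_iff] at hlam
    exact sq_mul_abs_resolvent_sub_le hlam.1 hlam.2.1 hlam.2.2 hψc hψb ht.2
end
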